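/- arXiv:1105.5940 — 3 statements merged into one kernel-verified Lean document; each statement's English description precedes it below -/
import Mathlib

section
/- For every y ∈ F, setting B = (y − y^{q^ℓ} − g(y))/(4η), one has f(y) = B^{q^2}·η and f(y)^{q^{2ℓ−2}} = B·η. Consequently, for all x, y ∈ F, ((y + y^{q^ℓ})/2)·x + f(y)·x^{q^2} + f(y)^{q^{2ℓ−2}}·x^{q^{2ℓ−2}} = A·x + B^{q^2}·η·x^{q^2} + B·η·x^{q^{2ℓ−2}}, where A = (y + y^{q^ℓ})/2. -/
/-!
Write `a m = y ^ q ^ m`. Then `g y` is a signed sum of three runs of alternating terms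
`a c, a (c + 2), …`, and `σ = (·) ^ q ^ 2` shifts every index by 2, so `g y + σ (g y)` telescopes
run by run; as `a` has period `2ℓ`, what survives is `σ u - u` for `u = y - y ^ q ^ ℓ`. This
identity says exactly `f y = σ B · η`, because `σ η = η` (`η ^ q = -η` with `q` odd). Applying
`(·) ^ q ^ (2ℓ - 2)` completes the orbit of `σ` and gives `(f y) ^ q ^ (2ℓ - 2) = B η`.
-/

open Finset

lemma sum_Icc_eq_sum_range {M : Type*} [AddCommMonoid M] (f : ℕ → M) {m n : ℕ} :
    ∑ i ∈ Icc m n, f i = ∑ i ∈ range (n + 1 - m), f (m + i) := by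
  rw [← Ico_add_one_right_eq_Icc, sum_Ico_eq_sum_range]

section OrbitSums

variable {R : Type*} [CommRing R]

lemma sum_range_alternating_add_shift (a : ℕ → R) (c n : ℕ) :
    ∑ i ∈ range n, (-1) ^ i * a (c + 2 * i) + ∑ i ∈ range n, (-1) ^ i * a (c + 2 * i + 2) =
      a c - (-1) ^ n * a (c + 2 * n) := by
  rw [← sum_add_distrib]
  convert sum_range_sub' (fun i ↦ (-1 : R) ^ i * a (c + 2 * i)) n using 1
  · refine sum_congr rfl fun i _ ↦ ?_
    rw [pow_succ, show c + 2 * (i + 1) = c + 2 * i + 2 by ring]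
    ring
  · simp

/-- The paper's `g(y)` for `ℓ = 2k+1` (so `2 * k + 1 - 1` is `ℓ - 1`), written in terms of the
orbit `a m = y ^ q ^ m`. -/
def gSeq (k : ℕ) (a : ℕ → R) : R :=
  (∑ i ∈ Icc 1 (2 * k + 1 - 1), (-1 : R) ^ (i + 1) * a (2 * i)) +
    (∑ j ∈ Icc 0 (k - 1), (-1 : R) ^ (k + j + 1) * a (2 * j + 1)) +
    (∑ t ∈ Icc (k + 1) (2 * k + 1 - 1), (-1 : R) ^ (k + t) * a (2 * t + 1))

lemma gSeq_eq {k : ℕ} (hk : 1 ≤ k) (a : ℕ → R) :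
    gSeq k a = ∑ i ∈ range (2 * k), (-1) ^ i * a (2 + 2 * i) +
      (-1) ^ (k + 1) * ∑ j ∈ range k, (-1) ^ j * a (1 + 2 * j) -
      ∑ t ∈ range k, (-1) ^ t * a (2 * k + 3 + 2 * t) := by
  rw [gSeq, sum_Icc_eq_sum_range, sum_Icc_eq_sum_range, sum_Icc_eq_sum_range, mul_sum,
    sub_eq_add_neg, ← sum_neg_distrib, show 2 * k + 1 - 1 + 1 - 1 = 2 * k by omega,
    show k - 1 + 1 - 0 = k by omega, show 2 * k + 1 - 1 + 1 - (k + 1) = k by omega]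
  congr 1
  congr 1
  all_goals refine sum_congr rfl fun i _ ↦ ?_
  · rw [show 1 + i + 1 = i + 2 by ring, pow_add, show 2 * (1 + i) = 2 + 2 * i by ring]
    simp
  · rw [show k + (0 + i) + 1 = k + 1 + i by ring, pow_add,
      show 2 * (0 + i) + 1 = 1 + 2 * i by ring]
    ring
  · rw [show k + (k + 1 + i) = 2 * k + 1 + i by ring, pow_add, pow_succ, pow_mul,
      show 2 * (k + 1 + i) + 1 = 2 * k + 3 + 2 * i by ring]
    simp

lemma gSeq_add_gSeq_shift {k : ℕ} (hk : 1 ≤ k) {a : ℕ → R}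
    (ha : Function.Periodic a (2 * (2 * k + 1))) :
    gSeq k a + gSeq k (fun m ↦ a (m + 2)) =
      (a 2 - a (2 * k + 1 + 2)) - (a 0 - a (2 * k + 1)) := by
  have hE := sum_range_alternating_add_shift a 2 (2 * k)
  have hO₁ := sum_range_alternating_add_shift a 1 k
  have hO₂ := sum_range_alternating_add_shift a (2 * k + 3) k
  have h0 : a (2 + 2 * (2 * k)) = a 0 := by convert ha 0 using 2; ring
  have h1 : a (2 * k + 3 + 2 * k) = a 1 := by convert ha 1 using 2; ring
  have hsign : ((-1 : R) ^ k) ^ 2 = 1 := by rw [← pow_mul, mul_comm, pow_mul]; simp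
  rw [gSeq_eq hk, gSeq_eq hk]
  rw [pow_mul, neg_one_sq, one_pow, one_mul, h0] at hE
  rw [h1] at hO₂
  rw [add_comm 1 (2 * k)] at hO₁
  linear_combination hE + (-1) ^ (k + 1) * hO₁ - hO₂ + a (2 * k + 1) * hsign

lemma map_gSeq {S : Type*} [CommRing S] (σ : R →+* S) (k : ℕ) (a : ℕ → R) :
    σ (gSeq k a) = gSeq k (fun m ↦ σ (a m)) := by
  simp [gSeq, map_sum]

lemma gSeq_orbit_add_map {q k : ℕ} (hk : 1 ≤ k) (σ : R →+* R)
    (hσ : ∀ x, σ x = x ^ q ^ 2) {y : R} (hy : y ^ q ^ (2 * (2 * k + 1)) = y) :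
    gSeq k (fun m ↦ y ^ q ^ m) + σ (gSeq k (fun m ↦ y ^ q ^ m)) =
      σ (y - y ^ q ^ (2 * k + 1)) - (y - y ^ q ^ (2 * k + 1)) := by
  have hσorbit : (fun m ↦ σ (y ^ q ^ m)) = fun m ↦ y ^ q ^ (m + 2) :=
    funext fun m ↦ by rw [hσ, ← pow_mul, ← pow_add]
  have horbit := gSeq_add_gSeq_shift hk (a := fun m ↦ y ^ q ^ m) fun m ↦ by
    dsimp only
    rw [pow_add, mul_comm, pow_mul, hy]
  rw [map_gSeq, hσorbit, horbit, map_sub, hσ, hσ, ← pow_mul, ← pow_add, pow_zero, pow_one]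

end OrbitSums

lemma inv_four_mul_add_eq_map_div_mul {F : Type*} [Field F] (σ : F →+* F) {η u G : F}
    (hη : σ η = η) (hη0 : η ≠ 0) (h4 : (4 : F) ≠ 0) (hG : G + σ G = σ u - u) :
    4⁻¹ * (u + G) = σ ((u - G) / (4 * η)) * η := by
  rw [map_div₀, map_sub, map_mul, map_ofNat, hη]
  field_simp
  linear_combination hG

lemma four_ne_zero_of_odd_char {R : Type*} [Ring R] [IsDomain R] {p : ℕ} [CharP R p]
    (hp : Odd p) : (4 : R) ≠ 0 := by
  have h2 : (2 : R) ≠ 0 := Ring.two_ne_zero (by rw [ringChar.eq R p]; rintro rfl; norm_num at hp)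
  rw [show (4 : R) = 2 ^ 2 by norm_num]
  exact pow_ne_zero 2 h2

theorem stmt9_general (p h q k ℓ : ℕ) (hp : p.Prime) (hpodd : Odd p) (hq : q = p ^ h)
    (hk : 1 ≤ k) (hℓ : ℓ = 2 * k + 1)
    (F : Type*) [Field F] [Fintype F] (hcard : Fintype.card F = q ^ (2 * ℓ))
    (η : F) (hη0 : η ≠ 0) (hηq : η ^ q = -η)
    (g f : F → F)
    (hg : ∀ y : F, g y =
      (∑ i ∈ Finset.Icc 1 (ℓ - 1), (-1 : F) ^ (i + 1) * y ^ (q ^ (2 * i))) +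
      (∑ j ∈ Finset.Icc 0 (k - 1), (-1 : F) ^ (k + j + 1) * y ^ (q ^ (2 * j + 1))) +
      (∑ t ∈ Finset.Icc (k + 1) (ℓ - 1), (-1 : F) ^ (k + t) * y ^ (q ^ (2 * t + 1))))
    (hf : ∀ y : F, f y = (4 : F)⁻¹ * (y - y ^ (q ^ ℓ) + g y)) :
    ∀ y : F,
      f y = ((y - y ^ (q ^ ℓ) - g y) / (4 * η)) ^ (q ^ 2) * η ∧
      (f y) ^ (q ^ (2 * ℓ - 2)) = ((y - y ^ (q ^ ℓ) - g y) / (4 * η)) * η ∧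
      ∀ x : F,
        ((y + y ^ (q ^ ℓ)) / 2) * x + f y * x ^ (q ^ 2) +
            (f y) ^ (q ^ (2 * ℓ - 2)) * x ^ (q ^ (2 * ℓ - 2)) =
          ((y + y ^ (q ^ ℓ)) / 2) * x +
            ((y - y ^ (q ^ ℓ) - g y) / (4 * η)) ^ (q ^ 2) * η * x ^ (q ^ 2) +
            ((y - y ^ (q ^ ℓ) - g y) / (4 * η)) * η * x ^ (q ^ (2 * ℓ - 2)) := by
  have := Fact.mk hp
  have : CharP F p := charP_of_card_eq_prime_pow (by rw [hcard, hq, ← pow_mul])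
  obtain ⟨σ, hσ⟩ : ∃ σ : F →+* F, ∀ x, σ x = x ^ q ^ 2 :=
    ⟨iterateFrobenius F p (h * 2), fun x ↦ by rw [iterateFrobenius_def, hq, pow_mul]⟩
  have hcycle (x : F) : x ^ q ^ (2 * ℓ) = x := hcard ▸ FiniteField.pow_card x
  have hση : σ η = η := by
    rw [hσ, sq, pow_mul, hηq, (hq ▸ hpodd.pow : Odd q).neg_pow, hηq, neg_neg]
  subst hℓ
  intro y
  have hG : g y + σ (g y) = σ (y - y ^ q ^ (2 * k + 1)) - (y - y ^ q ^ (2 * k + 1)) :=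
    (hg y).symm ▸ gSeq_orbit_add_map hk σ hσ (hcycle y)
  have hf₁ : f y = ((y - y ^ q ^ (2 * k + 1) - g y) / (4 * η)) ^ q ^ 2 * η := by
    rw [hf, ← hσ]
    exact inv_four_mul_add_eq_map_div_mul σ hση hη0 (four_ne_zero_of_odd_char hpodd) hG
  have hf₂ : f y ^ q ^ (2 * (2 * k + 1) - 2) = (y - y ^ q ^ (2 * k + 1) - g y) / (4 * η) * η := by
    have hfσ : f y = σ ((y - y ^ q ^ (2 * k + 1) - g y) / (4 * η) * η) := by
      rw [hf₁, map_mul, hση, hσ]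
    rw [hfσ, hσ, ← pow_mul, ← pow_add, show 2 + (2 * (2 * k + 1) - 2) = 2 * (2 * k + 1) by omega,
      hcycle]
  exact ⟨hf₁, hf₂, fun x ↦ by rw [hf₂, hf₁]⟩

/-- In a finite field `F` of order `q^(2ℓ)` (`q` odd prime power, `ℓ = 2k+1`,
`k ≥ 1`), with `η ≠ 0`, `η^q = -η` and `f`, `g` as in the paper, setting
`B = (y - y^(q^ℓ) - g y)/(4η)` one has `f y = B^(q^2)·η` and `(f y)^(q^(2ℓ-2)) = B·η`;
consequently the displayed multiplications agree. -/
theorem stmt9 (p h q k ℓ : ℕ) (hp : p.Prime) (hpodd : Odd p) (hq : q = p ^ h) (hh : 1 ≤ h)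
    (hk : 1 ≤ k) (hℓ : ℓ = 2 * k + 1)
    (F : Type*) [Field F] [Fintype F] (hcard : Fintype.card F = q ^ (2 * ℓ))
    (η : F) (hη0 : η ≠ 0) (hηq : η ^ q = -η)
    (g f : F → F)
    (hg : ∀ y : F, g y =
      (∑ i ∈ Finset.Icc 1 (ℓ - 1), (-1 : F) ^ (i + 1) * y ^ (q ^ (2 * i))) +
      (∑ j ∈ Finset.Icc 0 (k - 1), (-1 : F) ^ (k + j + 1) * y ^ (q ^ (2 * j + 1))) +
      (∑ t ∈ Finset.Icc (k + 1) (ℓ - 1), (-1 : F) ^ (k + t) * y ^ (q ^ (2 * t + 1))))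
    (hf : ∀ y : F, f y = (4 : F)⁻¹ * (y - y ^ (q ^ ℓ) + g y)) :
    ∀ y : F,
      f y = ((y - y ^ (q ^ ℓ) - g y) / (4 * η)) ^ (q ^ 2) * η ∧
      (f y) ^ (q ^ (2 * ℓ - 2)) = ((y - y ^ (q ^ ℓ) - g y) / (4 * η)) * η ∧
      ∀ x : F,
        ((y + y ^ (q ^ ℓ)) / 2) * x + f y * x ^ (q ^ 2) +
            (f y) ^ (q ^ (2 * ℓ - 2)) * x ^ (q ^ (2 * ℓ - 2)) =
          ((y + y ^ (q ^ ℓ)) / 2) * x +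
            ((y - y ^ (q ^ ℓ) - g y) / (4 * η)) ^ (q ^ 2) * η * x ^ (q ^ 2) +
            ((y - y ^ (q ^ ℓ) - g y) / (4 * η)) * η * x ^ (q ^ (2 * ℓ - 2)) :=
  stmt9_general p h q k ℓ hp hpodd hq hk hℓ F hcard η hη0 hηq g f hg hf
end

section
/- Let β ∈ F be a nonsquare in F (i.e. there is no t ∈ F with t² = β), and let ξ ∈ F satisfy ξ^{q^{ℓ+d}−1} = β·(β^{q^ℓ})⁻¹. Then ξ^{q^ℓ+1} lies in the subfield F_q, i.e. (ξ^{q^ℓ+1})^q = ξ^{q^ℓ+1}, and ξ^{q^ℓ+1} is a nonsquare in F_q, i.e. there is no t ∈ F with t^q = t and t² = ξ^{q^ℓ+1}. -/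
/-!
Put `Q = q^ℓ`, `N = q^(ℓ+d) - 1` and `ζ = ξ^((Q+1)/2)`, so that `ξ^(Q+1) = ζ²`. Since `|F| = Q²`,
Euler's criterion gives `β^((Q²-1)/2) = -1`, hence `(β^(1-Q))^((Q+1)/2) = -1`, i.e. `ζ^N = -1`.
Then `(ζ²)^N = 1`, so `ζ²` is fixed by `x ↦ x^(q^(ℓ+d))` as well as by `x ↦ x^(q^(2ℓ))`; as
`gcd(ℓ+d, 2ℓ) = 1` it is fixed by `x ↦ x^q`. If `ζ² = t²` with `t ∈ F_q`, then `t^N = ζ^N = -1`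
because `N` is even, while `t^(N+1) = t` then gives `-t = t`, so `t = 0`, which is absurd.
-/

open Function

theorem isPeriodicPt_pow_iff {M : Type*} [Monoid M] {q n : ℕ} {x : M} :
    IsPeriodicPt (· ^ q) n x ↔ x ^ q ^ n = x := by
  rw [IsPeriodicPt, IsFixedPt, pow_iterate]

theorem pow_eq_self_of_pow_pow_eq_self_of_coprime {M : Type*} [Monoid M] {q a b : ℕ} {x : M}
    (hab : a.Coprime b) (ha : x ^ q ^ a = x) (hb : x ^ q ^ b = x) : x ^ q = x := by
  simpa [hab.gcd_eq_one] using
    isPeriodicPt_pow_iff.mp ((isPeriodicPt_pow_iff.mpr ha).gcd (isPeriodicPt_pow_iff.mpr hb))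

theorem FiniteField.ringChar_ne_two_of_odd_card {F : Type*} [Field F] [Fintype F]
    (hodd : Odd (Fintype.card F)) : ringChar F ≠ 2 := by
  rw [Ne, even_card_iff_char_two, Nat.odd_iff.mp hodd]
  decide

theorem FiniteField.pow_card_div_two_eq_neg_one_of_not_isSquare {F : Type*} [Field F] [Fintype F]
    (hF : ringChar F ≠ 2) {β : F} (hβ : ¬IsSquare β) : β ^ (Fintype.card F / 2) = -1 := by
  classical
  rw [← quadraticChar_eq_pow_of_char_ne_two' hF, quadraticChar_neg_one_iff_not_isSquare.mpr hβ]
  rw [Int.cast_neg, Int.cast_one]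

theorem FiniteField.mul_inv_pow_pow_half_eq_neg_one {F : Type*} [Field F] [Fintype F] {Q : ℕ}
    (hQ : Odd Q) (hcard : Fintype.card F = Q ^ 2) {β : F} (hβ : ¬IsSquare β) :
    (β * (β ^ Q)⁻¹) ^ ((Q + 1) / 2) = -1 := by
  have hβ0 : β ≠ 0 := by rintro rfl; exact hβ .zero
  have hEuler := pow_card_div_two_eq_neg_one_of_not_isSquare
    (ringChar_ne_two_of_odd_card (hcard ▸ hQ.pow)) hβ
  obtain ⟨m, rfl⟩ := hQ
  have hexp : (2 * m + 1) * ((2 * m + 1 + 1) / 2) = (2 * m + 1 + 1) / 2 + (2 * m + 1) ^ 2 / 2 := by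
    have h1 : (2 * m + 1 + 1) / 2 = m + 1 := by omega
    have h2 : (2 * m + 1) ^ 2 / 2 = 2 * m * (m + 1) := by
      rw [show (2 * m + 1) ^ 2 = 2 * (2 * m * (m + 1)) + 1 by ring]; omega
    rw [h1, h2]; ring
  rw [mul_pow, inv_pow, ← pow_mul, hexp, pow_add, ← hcard, hEuler]
  field_simp

theorem sq_ne_sq_of_pow_eq_neg_one {F : Type*} [Field F] (hF : ringChar F ≠ 2) {N : ℕ}
    (hN : Even N) {ζ t : F} (hζ : ζ ^ N = -1) (ht : t ^ (N + 1) = t) : t ^ 2 ≠ ζ ^ 2 := by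
  intro h
  obtain ⟨m, rfl⟩ := hN
  have htN : t ^ (m + m) = -1 := by rw [← two_mul, pow_mul, h, ← pow_mul, two_mul, hζ]
  have ht0 : t = 0 := by
    rw [pow_succ, htN, neg_one_mul, neg_eq_iff_add_eq_zero, ← two_mul] at ht
    exact (mul_eq_zero.mp ht).resolve_left (Ring.two_ne_zero hF)
  rcases Nat.eq_zero_or_pos (m + m) with hm | hm
  · rw [hm, pow_zero] at htN
    exact Ring.neg_one_ne_one_of_char_ne_two hF htN.symm
  · rw [ht0, zero_pow hm.ne'] at htN
    exact zero_ne_one (neg_eq_zero.mp htN.symm).symm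

theorem stmt11_general (p h q ℓ d : ℕ) (hpodd : Odd p) (hq : q = p ^ h)
    (hgcd : Nat.gcd ℓ d = 1)
    (hodd : Odd (ℓ + d))
    (F : Type*) [Field F] [Fintype F] (hcard : Fintype.card F = q ^ (2 * ℓ))
    (β : F) (hβns : ¬ ∃ t : F, t ^ 2 = β)
    (ξ : F) (hξ : ξ ^ (q ^ (ℓ + d) - 1) = β * (β ^ (q ^ ℓ))⁻¹) :
    (ξ ^ (q ^ ℓ + 1)) ^ q = ξ ^ (q ^ ℓ + 1) ∧
      ¬ ∃ t : F, t ^ q = t ∧ t ^ 2 = ξ ^ (q ^ ℓ + 1) := by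
  have hqodd : Odd q := hq ▸ hpodd.pow
  have hQ : Odd (q ^ ℓ) := hqodd.pow
  have hcardQ : Fintype.card F = (q ^ ℓ) ^ 2 := by rw [hcard, ← pow_mul, mul_comm]
  have hβ : ¬IsSquare β := fun ⟨r, hr⟩ ↦ hβns ⟨r, by rw [sq, hr]⟩
  have hsucc : q ^ (ℓ + d) - 1 + 1 = q ^ (ℓ + d) := Nat.sub_add_cancel hqodd.pow.pos
  set ζ := ξ ^ ((q ^ ℓ + 1) / 2)
  have hζ : ζ ^ (q ^ (ℓ + d) - 1) = -1 := by
    rw [← pow_mul, mul_comm, pow_mul, hξ,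
      FiniteField.mul_inv_pow_pow_half_eq_neg_one hQ hcardQ hβ]
  rw [show ξ ^ (q ^ ℓ + 1) = ζ ^ 2 by rw [← pow_mul, Nat.div_mul_cancel hQ.add_one.two_dvd]]
  constructor
  · have hco : (ℓ + d).Coprime (2 * ℓ) :=
      hodd.coprime_two_right.mul_right (Nat.coprime_self_add_left.mpr (Nat.Coprime.symm hgcd))
    refine pow_eq_self_of_pow_pow_eq_self_of_coprime hco ?_ ?_
    · rw [← hsucc, pow_succ, ← pow_mul, mul_comm 2, pow_mul, hζ]; norm_num
    · rw [← hcard]; exact FiniteField.pow_card _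
  · rintro ⟨t, ht, ht2⟩
    refine sq_ne_sq_of_pow_eq_neg_one (FiniteField.ringChar_ne_two_of_odd_card (hcardQ ▸ hQ.pow))
      (Nat.Odd.sub_odd hqodd.pow odd_one) hζ ?_ ht2
    rw [hsucc]
    exact isPeriodicPt_pow_iff.mp (IsFixedPt.isPeriodicPt ht _)

/-- In a finite field `F` of order `q^(2ℓ)` (`q` odd prime power,
`gcd ℓ d = 1`, `0 < d < 2ℓ`, `ℓ + d` odd), if `β` is a nonsquare in `F` and
`ξ^(q^(ℓ+d)-1) = β·(β^(q^ℓ))⁻¹`, then `ξ^(q^ℓ+1)` lies in `F_q` and is a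
nonsquare in `F_q`. -/
theorem stmt11 (p h q ℓ d : ℕ) (hp : p.Prime) (hpodd : Odd p) (hq : q = p ^ h) (hh : 1 ≤ h)
    (hℓ : 0 < ℓ) (hd : 0 < d) (hd2 : d < 2 * ℓ) (hgcd : Nat.gcd ℓ d = 1)
    (hodd : Odd (ℓ + d))
    (F : Type*) [Field F] [Fintype F] (hcard : Fintype.card F = q ^ (2 * ℓ))
    (β : F) (hβns : ¬ ∃ t : F, t ^ 2 = β)
    (ξ : F) (hξ : ξ ^ (q ^ (ℓ + d) - 1) = β * (β ^ (q ^ ℓ))⁻¹) :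
    (ξ ^ (q ^ ℓ + 1)) ^ q = ξ ^ (q ^ ℓ + 1) ∧
      ¬ ∃ t : F, t ^ q = t ∧ t ^ 2 = ξ ^ (q ^ ℓ + 1) :=
  stmt11_general p h q ℓ d hpodd hq hgcd hodd F hcard β hβns ξ hξ
end

section
/- There exist additive bijections M, N, L of F such that for all x, y ∈ F: M(x) ⋆' N(y) = L(x • y), where x • y = ((y + y^{q^ℓ})/2)·x + f(y)·x^{q^2} + f(y)^{q^{2ℓ−2}}·x^{q^{2ℓ−2}} and x ⋆' y = (y + y^{q^ℓ})·x^{q^ℓ} + σ·β̄^{q^{2ℓ−2}}·((y − y^{q^ℓ})·ω⁻¹)^{q^{2ℓ−2}}·x^{q^{2ℓ−2}} + σ·β̄·(y − y^{q^ℓ})·ω⁻¹·x^{q^2}. (That is, the symplectic presemifield arising from the LMPTB semifield is isotopic to the symplectic presemifield arising from the BHB presemifield with parameters d = 2 and β = β̄.) -/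
/-!
Write `x̄ = x ^ q ^ ℓ`; since `x ^ q ^ (2ℓ) = x`, this is an involutive field automorphism, and
all the maps involved are built from powers of the `q`-Frobenius `φ`. Regrouping the three sums
defining `g` gives `4 f(y) = w + P(w ^ q ^ 2) - (-1)^k P(w ^ q)` with `w = y - ȳ` and
`P(z) = ∑_{i<k} (-1)^i z ^ q ^ (2i)`. As `P` commutes with `φ` and `w̄ = -w`, this yields
`f̄ = -f`, and the telescoping identity `P(z ^ q ^ 2) + P(z) = z - (-1)^k z ^ q ^ (2k)` yields
`2 (f ^ q ^ 2 + f) = w ^ q ^ 2`.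

With `s = ωβ`, so that `s̄ s = -1`, the maps `M x = s⁻¹ x + x̄`, `N y = (y + ȳ)/2 + f y` and
`L z = 2 z - 2 s z̄` satisfy `M x ⋆' N y = L (x • y)` by direct expansion, using only
`f̄ = -f`. Each of them has trivial kernel: for `M` and `L` because `z = c z̄` with `c̄ c = -1`
forces `z = -z`; for `N` because `N y = 0` forces `f y = 0` and `ȳ = -y`, whence
`2 y ^ q ^ 2 = 0` by the second identity. On the finite field `F` they are therefore bijective.
-/

open Finset

lemma RingHom.pow_apply_pow_apply {R : Type*} [NonAssocSemiring R] (φ : R →+* R) (a b : ℕ)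
    (x : R) : (φ ^ a) ((φ ^ b) x) = (φ ^ (a + b)) x := by
  rw [pow_add]; rfl

lemma RingHom.pow_apply_pow_apply_comm {R : Type*} [NonAssocSemiring R] (φ : R →+* R) (a b : ℕ)
    (x : R) : (φ ^ a) ((φ ^ b) x) = (φ ^ b) ((φ ^ a) x) := by
  rw [RingHom.pow_apply_pow_apply, RingHom.pow_apply_pow_apply, add_comm]

lemma RingHom.pow_apply_apply {R : Type*} [NonAssocSemiring R] (φ : R →+* R) (a : ℕ) (x : R) :
    (φ ^ a) (φ x) = (φ ^ (a + 1)) x := by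
  rw [pow_succ]; rfl

lemma RingHom.apply_pow_apply {R : Type*} [NonAssocSemiring R] (φ : R →+* R) (a : ℕ) (x : R) :
    φ ((φ ^ a) x) = (φ ^ (a + 1)) x := by
  rw [pow_succ']; rfl

lemma iterateFrobenius_pow_apply {R : Type*} [CommSemiring R] (p n : ℕ) [ExpChar R p] (e : ℕ)
    (x : R) : (iterateFrobenius R p n ^ e) x = x ^ (p ^ n) ^ e := by
  induction e with
  | zero => simp
  | succ e ih =>
    rw [pow_succ', RingHom.mul_def, RingHom.comp_apply, ih, iterateFrobenius_def, ← pow_mul,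
      ← pow_succ]

namespace SymplecticPresemifield

def Isotopic {α : Type*} [Add α] (mul₁ mul₂ : α → α → α) : Prop :=
  ∃ M N L : α ≃+ α, ∀ x y, mul₂ (M x) (N y) = L (mul₁ x y)

lemma sum_Icc_alternating_eq {R : Type*} [CommRing R] {k : ℕ} (hk : 1 ≤ k) (u : ℕ → R) :
    (∑ i ∈ Icc 1 (2 * k), (-1 : R) ^ (i + 1) * u (2 * i)) +
      (∑ j ∈ Icc 0 (k - 1), (-1 : R) ^ (k + j + 1) * u (2 * j + 1)) +
      (∑ t ∈ Icc (k + 1) (2 * k), (-1 : R) ^ (k + t) * u (2 * t + 1)) =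
    ∑ i ∈ range k, (-1) ^ i * (u (2 * i + 2) - u (2 * i + 2 + (2 * k + 1))) -
      (-1) ^ k * ∑ i ∈ range k, (-1) ^ i * (u (2 * i + 1) - u (2 * i + 1 + (2 * k + 1))) := by
  rw [← Ico_add_one_right_eq_Icc, ← Ico_add_one_right_eq_Icc, ← Ico_add_one_right_eq_Icc,
    sum_Ico_eq_sum_range, sum_Ico_eq_sum_range, sum_Ico_eq_sum_range,
    show 2 * k + 1 - 1 = k + k by omega, show k - 1 + 1 - 0 = k by omega,
    show 2 * k + 1 - (k + 1) = k by omega, sum_range_add]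
  simp only [mul_sub, sum_sub_distrib, mul_sum]
  ring_nf
  simp only [pow_mul', neg_one_sq, one_pow, mul_one, sum_neg_distrib]
  ring

section CommRing

variable {R : Type*} [CommRing R] (φ : R →+* R) (k : ℕ)

-- For `φ` the `q`-Frobenius of a field of order `q ^ (2ℓ)`, `τ x = x ^ q ^ ℓ` is the
-- conjugation over the subfield of order `q ^ ℓ`.
local notation "τ" => φ ^ (2 * k + 1)

def altFrobSum (z : R) : R := ∑ i ∈ range k, (-1) ^ i * (φ ^ (2 * i)) z

def lmptbCore (w : R) : R := w + altFrobSum φ k ((φ ^ 2) w) - (-1) ^ k * altFrobSum φ k (φ w)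

variable {φ k}

lemma conj_conj (hφ : φ ^ (2 * (2 * k + 1)) = 1) (x : R) : τ (τ x) = x := by
  rw [RingHom.pow_apply_pow_apply, ← two_mul, hφ, RingHom.coe_one, id_eq]

lemma pow_apply_eq_neg_one_pow_mul {ω : R} (hω : φ ω = -ω) (e : ℕ) :
    (φ ^ e) ω = (-1) ^ e * ω := by
  induction e with
  | zero => simp
  | succ e ih =>
    rw [← RingHom.apply_pow_apply, ih, map_mul, map_pow, map_neg, map_one, hω, pow_succ]
    ring

lemma pow_two_mul_apply_eq {β : R} (hβ : (φ ^ 2) β = β) (j : ℕ) :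
    (φ ^ (2 * j)) β = β := by
  rw [pow_mul, RingHom.coe_pow, Function.iterate_fixed hβ]

lemma conj_eq_neg_of_apply_eq_neg {ω : R} (hω : φ ω = -ω) : τ ω = -ω := by
  rw [pow_apply_eq_neg_one_pow_mul hω, Odd.neg_one_pow ⟨k, rfl⟩, neg_one_mul]

lemma conj_eq_apply_of_pow_two_apply_eq {β : R} (hβ : (φ ^ 2) β = β) : τ β = φ β := by
  rw [← RingHom.apply_pow_apply, pow_two_mul_apply_eq hβ]

lemma altFrobSum_add (z w : R) :
    altFrobSum φ k (z + w) = altFrobSum φ k z + altFrobSum φ k w := by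
  simp only [altFrobSum, map_add, mul_add, sum_add_distrib]

lemma altFrobSum_neg (z : R) : altFrobSum φ k (-z) = -altFrobSum φ k z := by
  simp only [altFrobSum, map_neg, mul_neg, sum_neg_distrib]

lemma pow_apply_altFrobSum (m : ℕ) (z : R) :
    (φ ^ m) (altFrobSum φ k z) = altFrobSum φ k ((φ ^ m) z) := by
  simp only [altFrobSum, map_sum, map_mul, map_pow, map_neg, map_one,
    RingHom.pow_apply_pow_apply, add_comm m]

lemma altFrobSum_pow_two_add (z : R) :
    altFrobSum φ k ((φ ^ 2) z) + altFrobSum φ k z = z - (-1) ^ k * (φ ^ (2 * k)) z := by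
  have h := sum_range_sub' (fun i ↦ (-1 : R) ^ i * (φ ^ (2 * i)) z) k
  simp only [pow_zero, mul_zero, one_mul, RingHom.coe_one, id_eq] at h
  rw [← h, altFrobSum, altFrobSum, ← sum_add_distrib]
  refine sum_congr rfl fun i _ ↦ ?_
  rw [RingHom.pow_apply_pow_apply, mul_add, pow_succ]
  ring

lemma lmptbCore_add (z w : R) : lmptbCore φ k (z + w) = lmptbCore φ k z + lmptbCore φ k w := by
  simp only [lmptbCore, map_add, altFrobSum_add]
  ring

lemma lmptbCore_neg (w : R) : lmptbCore φ k (-w) = -lmptbCore φ k w := by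
  simp only [lmptbCore, map_neg, altFrobSum_neg]
  ring

lemma pow_apply_lmptbCore (m : ℕ) (w : R) :
    (φ ^ m) (lmptbCore φ k w) = lmptbCore φ k ((φ ^ m) w) := by
  simp only [lmptbCore, map_sub, map_add, map_mul, map_pow, map_neg, map_one, pow_apply_altFrobSum,
    RingHom.pow_apply_pow_apply, RingHom.pow_apply_apply, RingHom.apply_pow_apply, add_comm m 2]

lemma lmptbCore_pow_two_add {w : R} (hw : τ w = -w) :
    (φ ^ 2) (lmptbCore φ k w) + lmptbCore φ k w = 2 * (φ ^ 2) w := by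
  have hτ₁ : (φ ^ (2 * k)) (φ w) = -w := by rw [RingHom.pow_apply_apply, hw]
  have hτ₂ : (φ ^ (2 * k)) ((φ ^ 2) w) = -φ w := by
    rw [RingHom.pow_apply_pow_apply, ← RingHom.apply_pow_apply, hw, map_neg]
  have hcomm : φ ((φ ^ 2) w) = (φ ^ 2) (φ w) := by
    rw [RingHom.apply_pow_apply, RingHom.pow_apply_apply]
  have hsq : ((-1 : R) ^ k) ^ 2 = 1 := by rw [← pow_mul, pow_mul', neg_one_sq, one_pow]
  have tele₂ := altFrobSum_pow_two_add (φ := φ) (k := k) ((φ ^ 2) w)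
  have tele₁ := altFrobSum_pow_two_add (φ := φ) (k := k) (φ w)
  rw [hτ₂] at tele₂
  rw [hτ₁] at tele₁
  rw [pow_apply_lmptbCore, lmptbCore, lmptbCore, hcomm]
  linear_combination tele₂ - (-1) ^ k * tele₁ - w * hsq

end CommRing

section Field

variable {F : Type*} [Field F] (φ : F →+* F) (k : ℕ)

local notation "τ" => φ ^ (2 * k + 1)

def lmptbPoly (y : F) : F := 4⁻¹ * lmptbCore φ k (y - τ y)

-- The products `•` and `⋆'` of the paper, with `x ^ q ^ e` written `(φ ^ e) x`
-- and `2ℓ - 2 = 4k`.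
def lmptbMul (f : F → F) (x y : F) : F :=
  (y + τ y) / 2 * x + f y * (φ ^ 2) x + (φ ^ (4 * k)) (f y) * (φ ^ (4 * k)) x

def bhbMul (ω β x y : F) : F :=
  (y + τ y) * τ x +
    ω ^ 2 * (φ ^ (4 * k)) β * (φ ^ (4 * k)) ((y - τ y) * ω⁻¹) * (φ ^ (4 * k)) x +
    ω ^ 2 * β * (y - τ y) * ω⁻¹ * (φ ^ 2) x

variable {φ k}

lemma lmptbPoly_add (y z : F) : lmptbPoly φ k (y + z) = lmptbPoly φ k y + lmptbPoly φ k z := by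
  rw [lmptbPoly, lmptbPoly, lmptbPoly, map_add, add_sub_add_comm, lmptbCore_add, mul_add]

lemma conj_lmptbPoly (hφ : φ ^ (2 * (2 * k + 1)) = 1) (y : F) :
    τ (lmptbPoly φ k y) = -lmptbPoly φ k y := by
  rw [lmptbPoly, map_mul, map_inv₀, map_ofNat, pow_apply_lmptbCore, map_sub, conj_conj hφ,
    ← neg_sub, lmptbCore_neg, mul_neg]

lemma two_mul_lmptbPoly_pow_two_add (h2 : (2 : F) ≠ 0) (hφ : φ ^ (2 * (2 * k + 1)) = 1)
    (y : F) :
    2 * ((φ ^ 2) (lmptbPoly φ k y) + lmptbPoly φ k y) = (φ ^ 2) (y - τ y) := by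
  have hw : τ (y - τ y) = -(y - τ y) := by rw [map_sub, conj_conj hφ, neg_sub]
  rw [lmptbPoly, map_mul, map_inv₀, map_ofNat, ← mul_add, lmptbCore_pow_two_add hw,
    show (4 : F) = 2 * 2 by norm_num]
  field_simp

lemma lmptbPoly_eq_sum (hk : 1 ≤ k) (y : F) :
    lmptbPoly φ k y = 4⁻¹ * (y - τ y +
      ((∑ i ∈ Icc 1 (2 * k), (-1 : F) ^ (i + 1) * (φ ^ (2 * i)) y) +
      (∑ j ∈ Icc 0 (k - 1), (-1 : F) ^ (k + j + 1) * (φ ^ (2 * j + 1)) y) +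
      (∑ t ∈ Icc (k + 1) (2 * k), (-1 : F) ^ (k + t) * (φ ^ (2 * t + 1)) y))) := by
  rw [sum_Icc_alternating_eq hk (fun e ↦ (φ ^ e) y), lmptbPoly, lmptbCore, altFrobSum,
    altFrobSum]
  simp only [map_sub, RingHom.pow_apply_pow_apply, RingHom.pow_apply_apply,
    RingHom.apply_pow_apply]
  ring_nf

lemma eq_zero_of_eq_mul_conj (h2 : (2 : F) ≠ 0) (hφ : φ ^ (2 * (2 * k + 1)) = 1) {s z : F}
    (hs : τ s * s = -1) (hz : z = s * τ z) : z = 0 := by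
  have hτz : τ z = τ s * z := by
    conv_lhs => rw [hz]
    rw [map_mul, conj_conj hφ]
  refine (mul_eq_zero.1 (?_ : 2 * z = 0)).resolve_left h2
  linear_combination hz + s * hτz + z * hs

variable {f : F → F}

lemma eq_zero_of_add_conj_div_two_add_eq_zero (h2 : (2 : F) ≠ 0)
    (hφ : φ ^ (2 * (2 * k + 1)) = 1) (hf_conj : ∀ y, τ (f y) = -f y)
    (hf_frob : ∀ y, 2 * ((φ ^ 2) (f y) + f y) = (φ ^ 2) (y - τ y)) {y : F}
    (hy : (y + τ y) / 2 + f y = 0) : y = 0 := by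
  have hy' : (τ y + y) / 2 - f y = 0 := by
    have := congrArg τ hy
    rwa [map_add, map_div₀, map_add, map_ofNat, hf_conj, conj_conj hφ, map_zero,
      ← sub_eq_add_neg] at this
  have hf0 : f y = 0 :=
    (mul_eq_zero.1 (by linear_combination hy - hy' : 2 * f y = 0)).resolve_left h2
  have hτy : τ y = -y := by
    rw [hf0, add_zero, div_eq_zero_iff, or_iff_left h2] at hy
    linear_combination hy
  have h2y := hf_frob y
  rw [hf0, map_zero, add_zero, mul_zero, hτy, sub_neg_eq_add, ← two_mul, eq_comm,
    map_eq_zero] at h2y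
  exact (mul_eq_zero.1 h2y).resolve_left h2

lemma bhbMul_eq (h2 : (2 : F) ≠ 0) (hφ : φ ^ (2 * (2 * k + 1)) = 1) {ω β : F}
    (hω : φ ω = -ω) (hβ : (φ ^ 2) β = β) (hβω : φ β * β * ω ^ 2 = 1)
    (hf_conj : ∀ y, τ (f y) = -f y) (x y : F) :
    bhbMul φ k ω β ((ω * β)⁻¹ * x + τ x) ((y + τ y) / 2 + f y) =
      2 * lmptbMul φ k f x y - 2 * (ω * β) * τ (lmptbMul φ k f x y) := by
  have hω0 : ω ≠ 0 := by rintro rfl; simp at hβω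
  have hβ0 : β ≠ 0 := by rintro rfl; simp at hβω
  have hφβ : (φ β)⁻¹ = β * ω ^ 2 :=
    inv_eq_of_mul_eq_one_right (by linear_combination hβω)
  have hω2 : (φ ^ 2) ω = ω := by
    rw [pow_apply_eq_neg_one_pow_mul hω, neg_one_sq, one_mul]
  have hω4 : (φ ^ (4 * k)) ω = ω := by
    rw [pow_apply_eq_neg_one_pow_mul hω, Even.neg_one_pow ⟨2 * k, by ring⟩, one_mul]
  have hβ4 : (φ ^ (4 * k)) β = β := by
    rw [show 4 * k = 2 * (2 * k) by ring, pow_two_mul_apply_eq hβ]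
  simp only [bhbMul, lmptbMul, map_add, map_sub, map_mul, map_neg, map_div₀, map_inv₀,
    map_ofNat, conj_eq_neg_of_apply_eq_neg hω, conj_eq_apply_of_pow_two_apply_eq hβ, hω2, hω4,
    hβ, hβ4, hf_conj, conj_conj hφ, RingHom.pow_apply_pow_apply_comm _ (2 * k + 1)]
  field_simp
  rw [div_eq_mul_inv, hφβ]
  ring

theorem isotopic_lmptbMul_bhbMul [Finite F] (h2 : (2 : F) ≠ 0) (hφ : φ ^ (2 * (2 * k + 1)) = 1)
    {ω β : F} (hω : φ ω = -ω) (hβ : (φ ^ 2) β = β) (hβω : φ β * β * ω ^ 2 = 1)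
    (hf_add : ∀ y z, f (y + z) = f y + f z) (hf_conj : ∀ y, τ (f y) = -f y)
    (hf_frob : ∀ y, 2 * ((φ ^ 2) (f y) + f y) = (φ ^ 2) (y - τ y)) :
    Isotopic (lmptbMul φ k f) (bhbMul φ k ω β) := by
  set s := ω * β
  have hs0 : s ≠ 0 := by
    refine mul_ne_zero ?_ ?_ <;> rintro rfl <;> simp at hβω
  have hs : τ s * s = -1 := by
    rw [map_mul, conj_eq_neg_of_apply_eq_neg hω, conj_eq_apply_of_pow_two_apply_eq hβ]
    linear_combination -hβω
  let M : F →+ F := AddMonoidHom.mk' (fun x ↦ s⁻¹ * x + τ x) fun a b ↦ by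
    simp only [map_add]; ring
  let N : F →+ F := AddMonoidHom.mk' (fun y ↦ (y + τ y) / 2 + f y) fun a b ↦ by
    simp only [map_add, hf_add]; ring
  let L : F →+ F := AddMonoidHom.mk' (fun z ↦ 2 * z - 2 * s * τ z) fun a b ↦ by
    simp only [map_add]; ring
  have hM : Function.Injective M :=
    (injective_iff_map_eq_zero M).2 fun x (hx : s⁻¹ * x + τ x = 0) ↦
      eq_zero_of_eq_mul_conj h2 hφ (s := -s) (by rw [map_neg, neg_mul_neg, hs])
        (by linear_combination s * hx - x * mul_inv_cancel₀ hs0)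
  have hN : Function.Injective N := (injective_iff_map_eq_zero N).2 fun y hy ↦
    eq_zero_of_add_conj_div_two_add_eq_zero h2 hφ hf_conj hf_frob hy
  have hL : Function.Injective L :=
    (injective_iff_map_eq_zero L).2 fun z (hz : 2 * z - 2 * s * τ z = 0) ↦
      eq_zero_of_eq_mul_conj h2 hφ hs (mul_left_cancel₀ h2 (by linear_combination hz))
  exact ⟨.ofBijective M (Finite.injective_iff_bijective.1 hM),
    .ofBijective N (Finite.injective_iff_bijective.1 hN),
    .ofBijective L (Finite.injective_iff_bijective.1 hL),
    bhbMul_eq h2 hφ hω hβ hβω hf_conj⟩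

end Field

end SymplecticPresemifield

open SymplecticPresemifield

theorem stmt14_general (p hexp q k ℓ : ℕ) (hp : p.Prime) (hpodd : Odd p) (hq : q = p ^ hexp)
    (hk : 1 ≤ k) (hℓ : ℓ = 2 * k + 1)
    (F : Type*) [Field F] [Fintype F] (hcard : Fintype.card F = q ^ (2 * ℓ))
    (ω : F) (hωq : ω ^ q = -ω)
    (β : F) (hβ : β ^ (q ^ 2) = β) (hβω : β ^ (q + 1) * ω ^ 2 = 1)
    (g f : F → F)
    (hg : ∀ y : F, g y =
      (∑ i ∈ Finset.Icc 1 (ℓ - 1), (-1 : F) ^ (i + 1) * y ^ (q ^ (2 * i))) +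
      (∑ j ∈ Finset.Icc 0 (k - 1), (-1 : F) ^ (k + j + 1) * y ^ (q ^ (2 * j + 1))) +
      (∑ t ∈ Finset.Icc (k + 1) (ℓ - 1), (-1 : F) ^ (k + t) * y ^ (q ^ (2 * t + 1))))
    (hf : ∀ y : F, f y = (4 : F)⁻¹ * (y - y ^ (q ^ ℓ) + g y))
    (bul star' : F → F → F)
    (hbul : ∀ x y : F, bul x y = ((y + y ^ (q ^ ℓ)) / 2) * x + f y * x ^ (q ^ 2) +
      (f y) ^ (q ^ (2 * ℓ - 2)) * x ^ (q ^ (2 * ℓ - 2)))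
    (hstar' : ∀ x y : F, star' x y = (y + y ^ (q ^ ℓ)) * x ^ (q ^ ℓ) +
      ω ^ 2 * β ^ (q ^ (2 * ℓ - 2)) * ((y - y ^ (q ^ ℓ)) * ω⁻¹) ^ (q ^ (2 * ℓ - 2)) *
        x ^ (q ^ (2 * ℓ - 2)) +
      ω ^ 2 * β * (y - y ^ (q ^ ℓ)) * ω⁻¹ * x ^ (q ^ 2)) :
    ∃ M N L : F ≃+ F, ∀ x y : F, star' (M x) (N y) = L (bul x y) := by
  subst hq hℓ
  have : Fact p.Prime := ⟨hp⟩
  have : CharP F p := charP_of_card_eq_prime_pow (hcard.trans (pow_mul _ _ _).symm)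
  have h2 : (2 : F) ≠ 0 := Ring.two_ne_zero <| by
    rw [ringChar.eq F p]; rintro rfl; exact absurd hpodd (by decide)
  set σ := iterateFrobenius F p hexp
  have hσ (e : ℕ) (x : F) : x ^ (p ^ hexp) ^ e = (σ ^ e) x :=
    (iterateFrobenius_pow_apply p hexp e x).symm
  have hσ1 (x : F) : x ^ p ^ hexp = σ x := by simpa using hσ 1 x
  have hσ_period : σ ^ (2 * (2 * k + 1)) = 1 :=
    RingHom.ext fun x ↦ by rw [← hσ, ← hcard, FiniteField.pow_card]; rfl
  rw [show 2 * (2 * k + 1) - 2 = 4 * k by omega] at hbul hstar'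
  rw [hσ1] at hωq
  rw [pow_succ, hσ1] at hβω
  simp only [hσ, Nat.add_sub_cancel] at hg hf hbul hstar' hβ
  obtain rfl : f = lmptbPoly σ k := funext fun y ↦ by rw [hf, hg, lmptbPoly_eq_sum hk]
  obtain rfl : bul = lmptbMul σ k (lmptbPoly σ k) := funext₂ hbul
  obtain rfl : star' = bhbMul σ k ω β := funext₂ hstar'
  exact isotopic_lmptbMul_bhbMul h2 hσ_period hωq hβ hβω lmptbPoly_add
    (conj_lmptbPoly hσ_period) (two_mul_lmptbPoly_pow_two_add h2 hσ_period)

/-- Theorem 4.5, symplectic version: the symplectic presemifield arising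
from the LMPTB semifield `P(q,ℓ)` is isotopic to the symplectic presemifield arising from
the BHB presemifield with parameters `d = 2`, `β = β̄`. -/
theorem stmt14 (p hexp q k ℓ : ℕ) (hp : p.Prime) (hpodd : Odd p) (hq : q = p ^ hexp)
    (hh : 1 ≤ hexp) (hk : 1 ≤ k) (hℓ : ℓ = 2 * k + 1)
    (F : Type*) [Field F] [Fintype F] (hcard : Fintype.card F = q ^ (2 * ℓ))
    (ω : F) (hω0 : ω ≠ 0) (hωq : ω ^ q = -ω)
    (β : F) (hβ : β ^ (q ^ 2) = β) (hβω : β ^ (q + 1) * ω ^ 2 = 1)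
    (g f : F → F)
    (hg : ∀ y : F, g y =
      (∑ i ∈ Finset.Icc 1 (ℓ - 1), (-1 : F) ^ (i + 1) * y ^ (q ^ (2 * i))) +
      (∑ j ∈ Finset.Icc 0 (k - 1), (-1 : F) ^ (k + j + 1) * y ^ (q ^ (2 * j + 1))) +
      (∑ t ∈ Finset.Icc (k + 1) (ℓ - 1), (-1 : F) ^ (k + t) * y ^ (q ^ (2 * t + 1))))
    (hf : ∀ y : F, f y = (4 : F)⁻¹ * (y - y ^ (q ^ ℓ) + g y))
    (bul star' : F → F → F)
    (hbul : ∀ x y : F, bul x y = ((y + y ^ (q ^ ℓ)) / 2) * x + f y * x ^ (q ^ 2) +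
      (f y) ^ (q ^ (2 * ℓ - 2)) * x ^ (q ^ (2 * ℓ - 2)))
    (hstar' : ∀ x y : F, star' x y = (y + y ^ (q ^ ℓ)) * x ^ (q ^ ℓ) +
      ω ^ 2 * β ^ (q ^ (2 * ℓ - 2)) * ((y - y ^ (q ^ ℓ)) * ω⁻¹) ^ (q ^ (2 * ℓ - 2)) *
        x ^ (q ^ (2 * ℓ - 2)) +
      ω ^ 2 * β * (y - y ^ (q ^ ℓ)) * ω⁻¹ * x ^ (q ^ 2)) :
    ∃ M N L : F ≃+ F, ∀ x y : F, star' (M x) (N y) = L (bul x y) :=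
  stmt14_general p hexp q k ℓ hp hpodd hq hk hℓ F hcard ω hωq β hβ hβω g f hg hf bul star' hbul
    hstar'
end
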